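/- arXiv:2211.03272 — 4 statements merged into one kernel-verified Lean document; each statement's English description precedes it below -/
import Mathlib

section
/- For every graph F with chromatic number χ(F) > 2 and every positive integer s, ex(n, {F, M_{s+1}}) = s(n − s) + O(1); that is, there exists a constant C = C(F, s) such that for all n, |ex(n, {F, M_{s+1}}) − s(n − s)| ≤ C. -/
open SimpleGraph Finset

/-- `Contains G H` means `G` contains a copy of `H`: an injective map preserving adjacency
(i.e. an injective graph homomorphism; isolated vertices of `H` need distinct hosts in `G`). -/
def Contains {V W : Type*} (G : SimpleGraph V) (H : SimpleGraph W) : Prop :=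
  ∃ f : W → V, Function.Injective f ∧ ∀ ⦃a b : W⦄, H.Adj a b → G.Adj (f a) (f b)

/-- `matchingGraph t` is the matching `M_t` consisting of `t` independent edges. -/
def matchingGraph (t : ℕ) : SimpleGraph (Fin t × Fin 2) :=
  SimpleGraph.fromRel (fun a b => a.1 = b.1)

/-- The number of edges of a graph. -/
noncomputable def edgeCount {V : Type*} (G : SimpleGraph V) : ℕ := G.edgeSet.ncard

/-- `exNum n P` is the maximum number of edges of an `n`-vertex graph satisfying the
freeness condition `P` (the extremal/Turán number). -/
noncomputable def exNum (n : ℕ) (P : SimpleGraph (Fin n) → Prop) : ℕ :=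
  sSup {m | ∃ G : SimpleGraph (Fin n), P G ∧ m = edgeCount G}

/-- `I` is a deletable color class of `F`: an independent set whose deletion decreases the
chromatic number (equivalently, a color class in some proper coloring of `F` with `χ(F)`
colors). `F.induce Iᶜ` is `F − I`, with isolated vertices retained. -/
def colorClassDel {V : Type*} (F : SimpleGraph V) (I : Set V) : Prop :=
  (∀ a ∈ I, ∀ b ∈ I, ¬ F.Adj a b) ∧ (F.induce Iᶜ).chromaticNumber < F.chromaticNumber

/-- `A` is a color class of a proper two-coloring of `F`: both `A` and its complement are
independent sets. -/
def twoColorClass {V : Type*} (F : SimpleGraph V) (A : Set V) : Prop :=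
  (∀ a ∈ A, ∀ b ∈ A, ¬ F.Adj a b) ∧ (∀ a ∈ Aᶜ, ∀ b ∈ Aᶜ, ¬ F.Adj a b)

/-!
The lower bound is `K_{s,n-s}`: it is bipartite, hence `F`-free since `χ(F) > 2`, and its side of
size `s` covers every edge, so it has no `s + 1` disjoint edges.

For the upper bound, take a maximum matching in an `M_{s+1}`-free graph on `n` vertices; it has
`k ≤ s` edges. Its `2k` vertices cover every edge. For a matching edge `uv`, every neighbour of
`u` outside the matching equals every neighbour of `v` outside it, since otherwise `uv` could be
replaced by two disjoint edges. So `u` and `v` together have at most `n + 1` such neighbours, and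
the graph has at most `k (n + 1) + (2k)² ≤ s n + s + 4 s²` edges.
-/

lemma Finset.card_add_card_le_of_forall_eq {α : Type*} [Fintype α] {A B : Finset α}
    (h : ∀ a ∈ A, ∀ b ∈ B, a = b) : #A + #B ≤ Fintype.card α + 1 := by
  obtain rfl | ⟨a, ha⟩ := A.eq_empty_or_nonempty
  · simpa using (card_le_univ B).trans (Nat.le_succ _)
  · have hB : #B ≤ 1 := card_le_one.2 fun b hb b' hb' => (h a ha b hb).symm.trans (h a ha b' hb')
    have hA := card_le_univ A
    omega

namespace SimpleGraph

lemma IsVertexCover.card_edgeFinset_le_sum_degree {V : Type*} [Fintype V]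
    {G : SimpleGraph V} [DecidableRel G.Adj] {c : Finset V} (hc : G.IsVertexCover c) :
    #G.edgeFinset ≤ ∑ v ∈ c, G.degree v := by
  classical
  calc #G.edgeFinset ≤ #(c.biUnion fun v => G.incidenceFinset v) := card_le_card fun e he => ?_
    _ ≤ ∑ v ∈ c, #(G.incidenceFinset v) := card_biUnion_le
    _ = ∑ v ∈ c, G.degree v := by simp only [card_incidenceFinset_eq_degree]
  induction e using Sym2.ind with
  | _ x y =>
    rw [mem_edgeFinset, mem_edgeSet] at he
    rcases hc he with hx | hy
    · exact mem_biUnion.2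
        ⟨x, hx, (mem_incidenceFinset _ _ _).2 (G.mk'_mem_incidenceSet_left_iff.2 he)⟩
    · exact mem_biUnion.2
        ⟨y, hy, (mem_incidenceFinset _ _ _).2 (G.mk'_mem_incidenceSet_right_iff.2 he)⟩

lemma IsBipartiteWith.isVertexCover {V : Type*} {G : SimpleGraph V} {s t : Set V}
    (h : G.IsBipartiteWith s t) : G.IsVertexCover s :=
  fun _ _ hvw => (h.mem_of_adj hvw).imp And.left And.right

lemma card_edgeFinset_top_between_compl {V : Type*} [Fintype V] [DecidableEq V] (A : Finset V) :
    #((⊤ : SimpleGraph V).between A ↑Aᶜ).edgeFinset = #A * #Aᶜ := by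
  rw [← isBipartiteWith_sum_degrees_eq_card_edges (between_isBipartiteWith
    (disjoint_coe.2 disjoint_compl_right)), sum_const_nat fun v hv => ?_]
  rw [← card_neighborFinset_eq_degree]
  congr 1
  ext w
  simp only [mem_neighborFinset, between_adj, top_adj, mem_coe, mem_compl]
  grind

end SimpleGraph

lemma Contains.chromaticNumber_le {V W : Type*} {G : SimpleGraph V} {H : SimpleGraph W}
    (h : Contains G H) : H.chromaticNumber ≤ G.chromaticNumber :=
  let ⟨f, _, hf⟩ := h
  chromaticNumber_mono_of_hom ⟨f, fun hab => hf hab⟩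

lemma not_contains_of_isBipartite {V W : Type*} {G : SimpleGraph V} {F : SimpleGraph W}
    (hF : 2 < F.chromaticNumber) (hG : G.IsBipartite) : ¬ Contains G F := fun h =>
  hF.not_ge (h.chromaticNumber_le.trans (chromaticNumber_le_two_iff_isBipartite.2 hG))

lemma edgeCount_eq_card_edgeFinset {V : Type*} (G : SimpleGraph V) [Fintype G.edgeSet] :
    edgeCount G = #G.edgeFinset :=
  Set.ncard_eq_toFinset_card' _

lemma exNum_le {n m : ℕ} {P : SimpleGraph (Fin n) → Prop}
    (h : ∀ G, P G → edgeCount G ≤ m) : exNum n P ≤ m :=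
  csSup_le' fun _ ⟨G, hG, hm⟩ => hm ▸ h G hG

lemma le_exNum {n : ℕ} {P : SimpleGraph (Fin n) → Prop} {G : SimpleGraph (Fin n)} (hG : P G) :
    edgeCount G ≤ exNum n P := by
  refine le_csSup ?_ ⟨G, hG, rfl⟩
  refine ((Set.finite_range (edgeCount (V := Fin n))).subset ?_).bddAbove
  rintro _ ⟨G', -, rfl⟩
  exact ⟨G', rfl⟩

lemma matchingGraph_adj {t : ℕ} {a b : Fin t × Fin 2} :
    (matchingGraph t).Adj a b ↔ a.1 = b.1 ∧ a.2 ≠ b.2 := by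
  simp only [matchingGraph, fromRel_adj, ne_eq, Prod.ext_iff]
  grind

namespace SimpleGraph

variable {V ι : Type*} {G : SimpleGraph V} {f : ι × Fin 2 → V}

def IsLabeledMatching (G : SimpleGraph V) (f : ι × Fin 2 → V) : Prop :=
  Function.Injective f ∧ ∀ i, G.Adj (f (i, 0)) (f (i, 1))

namespace IsLabeledMatching

lemma adj (hf : G.IsLabeledMatching f) (i : ι) {j j' : Fin 2} (h : j ≠ j') :
    G.Adj (f (i, j)) (f (i, j')) := by
  fin_cases j <;> fin_cases j' <;> simp_all [hf.2 i, (hf.2 i).symm]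

lemma contains [Fintype ι] (hf : G.IsLabeledMatching f) :
    Contains G (matchingGraph (Fintype.card ι)) := by
  let e := (Fintype.equivFin ι).symm
  refine ⟨fun p => f (e p.1, p.2), fun p q h => ?_, fun a b hab => ?_⟩
  · have h' := hf.1 h
    exact Prod.ext (e.injective (congrArg Prod.fst h')) (congrArg Prod.snd h' :)
  · obtain ⟨h1, h2⟩ := matchingGraph_adj.1 hab
    simpa only [h1] using hf.adj (e b.1) h2

lemma card_le_card_of_isVertexCover [Fintype ι] (hf : G.IsLabeledMatching f) {c : Finset V}
    (hc : G.IsVertexCover c) : Fintype.card ι ≤ #c := by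
  classical
  let g : ι → V := fun i => if f (i, 0) ∈ c then f (i, 0) else f (i, 1)
  have hg : ∀ i, ∃ j, g i = f (i, j) := fun i => by
    by_cases h : f (i, 0) ∈ c
    · exact ⟨0, if_pos h⟩
    · exact ⟨1, if_neg h⟩
  refine card_le_card_of_injOn g (fun i _ => ?_) (fun i _ i' _ hii' => ?_)
  · by_cases h : f (i, 0) ∈ c
    · simp [g, h]
    · simpa [g, h] using (hc (hf.2 i)).resolve_left h
  · obtain ⟨j, hj⟩ := hg i
    obtain ⟨j', hj'⟩ := hg i'
    exact congrArg Prod.fst (hf.1 (hj.symm.trans (hii'.trans hj')))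

lemma option (hf : G.IsLabeledMatching f) {x y : V} (hxy : G.Adj x y)
    (hx : x ∉ Set.range f) (hy : y ∉ Set.range f) :
    G.IsLabeledMatching fun p : Option ι × Fin 2 =>
      p.1.elim (![x, y] p.2) fun i => f (i, p.2) := by
  refine ⟨?_, fun i => ?_⟩
  · rintro ⟨_ | i, j⟩ ⟨_ | i', j'⟩ h <;> simp only [Option.elim] at h
    · fin_cases j <;> fin_cases j' <;> simp_all [hxy.ne, hxy.ne']
    · fin_cases j <;> simp only [Fin.zero_eta, Fin.mk_one, Matrix.cons_val] at h
      exacts [(hx ⟨_, h.symm⟩).elim, (hy ⟨_, h.symm⟩).elim]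
    · fin_cases j' <;> simp only [Fin.zero_eta, Fin.mk_one, Matrix.cons_val] at h
      exacts [(hx ⟨_, h⟩).elim, (hy ⟨_, h⟩).elim]
    · simpa using hf.1 h
  · cases i
    · simpa using hxy
    · exact hf.2 _

lemma update [DecidableEq ι] (hf : G.IsLabeledMatching f) (i : ι) {a : V}
    (ha : a ∉ Set.range f) (hadj : G.Adj (f (i, 0)) a) :
    G.IsLabeledMatching (Function.update f (i, 1) a) := by
  refine ⟨fun p q h => ?_, fun j => ?_⟩
  · by_cases hp : p = (i, 1) <;> by_cases hq : q = (i, 1) <;>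
      simp only [hp, hq, Function.update_self, Function.update_of_ne, Ne, not_false_eq_true]
        at h
    · rw [hp, hq]
    · exact absurd ⟨q, h.symm⟩ ha
    · exact absurd ⟨p, h⟩ ha
    · exact hf.1 h
  · by_cases hj : j = i
    · subst hj
      simpa [Function.update_of_ne (show (j, (0 : Fin 2)) ≠ (j, 1) by simp)] using hadj
    · simpa [Function.update_of_ne, hj] using hf.2 j

lemma isVertexCover_range [Fintype ι] (hf : G.IsLabeledMatching f)
    (hmax : ¬ Contains G (matchingGraph (Fintype.card ι + 1))) :
    G.IsVertexCover (Set.range f) := by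
  intro x y hxy
  by_contra! h
  have := (hf.option hxy h.1 h.2).contains
  rw [Fintype.card_option] at this
  exact hmax this

/-- Otherwise replacing the edge `i` by the edges `f (i, 0) a` and `f (i, 1) b` would give a
larger matching. -/
lemma eq_of_adj_of_adj [Fintype ι] (hf : G.IsLabeledMatching f)
    (hmax : ¬ Contains G (matchingGraph (Fintype.card ι + 1))) (i : ι) {a b : V}
    (ha : G.Adj (f (i, 0)) a) (hb : G.Adj (f (i, 1)) b) (ha_out : a ∉ Set.range f)
    (hb_out : b ∉ Set.range f) : a = b := by
  classical
  by_contra hab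
  have hv_out : f (i, 1) ∉ Set.range (Function.update f (i, 1) a) := by
    rintro ⟨p, hp⟩
    by_cases h : p = (i, 1)
    · subst h
      exact ha_out ⟨_, ((Function.update_self _ _ _).symm.trans hp).symm⟩
    · rw [Function.update_of_ne h] at hp
      exact h (hf.1 hp)
  have hb_out' : b ∉ Set.range (Function.update f (i, 1) a) := by
    rintro ⟨p, hp⟩
    by_cases h : p = (i, 1)
    · subst h
      exact hab ((Function.update_self _ _ _).symm.trans hp)
    · rw [Function.update_of_ne h] at hp
      exact hb_out ⟨p, hp⟩
  have := ((hf.update i ha_out ha).option hb hv_out hb_out').contains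
  rw [Fintype.card_option] at this
  exact hmax this

lemma card_edgeFinset_le [Fintype ι] [Fintype V] [DecidableRel G.Adj]
    (hf : G.IsLabeledMatching f) (hmax : ¬ Contains G (matchingGraph (Fintype.card ι + 1))) :
    #G.edgeFinset ≤ Fintype.card ι * (Fintype.card V + 1) + (2 * Fintype.card ι) ^ 2 := by
  classical
  set S := univ.image f
  set out := fun v => #(G.neighborFinset v \ S)
  have hS : #S = 2 * Fintype.card ι := by
    rw [card_image_of_injective _ hf.1, card_univ, Fintype.card_prod, Fintype.card_fin, mul_comm]
  have hcover : G.IsVertexCover S := by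
    simpa [S] using isVertexCover_range hf hmax
  have hdeg : ∀ v, G.degree v ≤ #S + out v := fun v => by
    rw [← card_neighborFinset_eq_degree, ← card_inter_add_card_sdiff (G.neighborFinset v) S]
    exact Nat.add_le_add_right (card_le_card inter_subset_right) _
  have hpair : ∀ i, out (f (i, 0)) + out (f (i, 1)) ≤ Fintype.card V + 1 := fun i =>
    card_add_card_le_of_forall_eq fun a ha b hb => by
      rw [mem_sdiff, mem_neighborFinset] at ha hb
      exact eq_of_adj_of_adj hf hmax i ha.1 hb.1 (by simpa [S] using ha.2) (by simpa [S] using hb.2)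
  calc #G.edgeFinset ≤ ∑ v ∈ S, G.degree v := hcover.card_edgeFinset_le_sum_degree
    _ = ∑ p, G.degree (f p) := sum_image fun _ _ _ _ h => hf.1 h
    _ ≤ ∑ p, (#S + out (f p)) := sum_le_sum fun p _ => hdeg (f p)
    _ = #S * #S + ∑ i, (out (f (i, 0)) + out (f (i, 1))) := by
      rw [sum_add_distrib, sum_const, Fintype.sum_prod_type, card_univ, Fintype.card_prod,
        Fintype.card_fin, hS, smul_eq_mul]
      simp only [Fin.sum_univ_two]
      ring
    _ ≤ #S * #S + ∑ _i : ι, (Fintype.card V + 1) :=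
      Nat.add_le_add_left (sum_le_sum fun i _ => hpair i) _
    _ = Fintype.card ι * (Fintype.card V + 1) + (2 * Fintype.card ι) ^ 2 := by
      rw [sum_const, card_univ, smul_eq_mul, hS]
      ring

end IsLabeledMatching

end SimpleGraph

lemma contains_matchingGraph_iff {V : Type*} {G : SimpleGraph V} {k : ℕ} :
    Contains G (matchingGraph k) ↔ ∃ f : Fin k × Fin 2 → V, G.IsLabeledMatching f := by
  constructor
  · rintro ⟨f, hf, hadj⟩
    exact ⟨f, hf, fun _ => hadj (matchingGraph_adj.2 ⟨rfl, by simp⟩)⟩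
  · rintro ⟨f, hf⟩
    have := hf.contains
    rwa [Fintype.card_fin] at this

lemma card_edgeFinset_le_of_not_contains_matchingGraph {V : Type*} [Fintype V]
    {G : SimpleGraph V} [DecidableRel G.Adj] {s : ℕ}
    (h : ¬ Contains G (matchingGraph (s + 1))) :
    #G.edgeFinset ≤ s * (Fintype.card V + 1) + (2 * s) ^ 2 := by
  classical
  set k := Nat.findGreatest (fun k => Contains G (matchingGraph k)) s
  have hks : k ≤ s := Nat.findGreatest_le s
  have hk : Contains G (matchingGraph k) :=
    Nat.findGreatest_spec (P := fun k => Contains G (matchingGraph k)) (Nat.zero_le s)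
      (contains_matchingGraph_iff.2 ⟨fun p => p.1.elim0, fun p => p.1.elim0, fun i => i.elim0⟩)
  have hmax : ¬ Contains G (matchingGraph (Fintype.card (Fin k) + 1)) := by
    rw [Fintype.card_fin]
    rcases hks.lt_or_eq with hlt | heq
    · exact Nat.findGreatest_is_greatest (Nat.lt_succ_self k) hlt
    · rwa [heq]
  obtain ⟨f, hf⟩ := contains_matchingGraph_iff.1 hk
  calc #G.edgeFinset
      ≤ Fintype.card (Fin k) * (Fintype.card V + 1) + (2 * Fintype.card (Fin k)) ^ 2 :=
        hf.card_edgeFinset_le hmax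
    _ ≤ s * (Fintype.card V + 1) + (2 * s) ^ 2 := by rw [Fintype.card_fin]; gcongr

lemma exists_isBipartite_not_contains_matchingGraph (n s : ℕ) :
    ∃ G : SimpleGraph (Fin n), G.IsBipartite ∧ ¬ Contains G (matchingGraph (s + 1)) ∧
      (s : ℤ) * (n - s) ≤ edgeCount G := by
  classical
  set A : Finset (Fin n) := {v | (v : ℕ) < s}
  have hbip : ((⊤ : SimpleGraph (Fin n)).between A ↑Aᶜ).IsBipartiteWith A ↑Aᶜ :=
    between_isBipartiteWith (disjoint_coe.2 disjoint_compl_right)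
  have hA : #A = min n s := Fin.card_filter_val_lt
  refine ⟨_, hbip.isBipartite, fun h => ?_, ?_⟩
  · obtain ⟨f, hf⟩ := contains_matchingGraph_iff.1 h
    have := hf.card_le_card_of_isVertexCover hbip.isVertexCover
    rw [Fintype.card_fin, hA] at this
    omega
  · rw [edgeCount_eq_card_edgeFinset, card_edgeFinset_top_between_compl, card_compl, hA,
      Fintype.card_fin]
    rcases le_total s n with hsn | hns
    · rw [min_eq_right hsn, Nat.cast_mul, Nat.cast_sub hsn]
    · rw [min_eq_left hns, Nat.sub_self, mul_zero, Nat.cast_zero]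
      exact mul_nonpos_of_nonneg_of_nonpos (by positivity) (by omega)

theorem extremal_asymptotic_general {V : Type*} (F : SimpleGraph V)
    (hF : 2 < F.chromaticNumber) (s : ℕ) :
    ∃ C : ℤ, ∀ n : ℕ,
      |(exNum n (fun G => ¬ Contains G F ∧ ¬ Contains G (matchingGraph (s + 1))) : ℤ) -
          (s : ℤ) * ((n : ℤ) - (s : ℤ))| ≤ C := by
  refine ⟨s + 5 * s ^ 2, fun n => ?_⟩
  set P : SimpleGraph (Fin n) → Prop :=
    fun G => ¬ Contains G F ∧ ¬ Contains G (matchingGraph (s + 1))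
  have hupper : (exNum n P : ℤ) ≤ s * (n + 1) + (2 * s) ^ 2 := by
    refine mod_cast exNum_le fun G (hG : P G) => ?_
    classical
    simpa [edgeCount_eq_card_edgeFinset] using card_edgeFinset_le_of_not_contains_matchingGraph hG.2
  obtain ⟨B, hB, hBM, hBcard⟩ := exists_isBipartite_not_contains_matchingGraph n s
  have hlower : (s : ℤ) * (n - s) ≤ exNum n P :=
    hBcard.trans (mod_cast le_exNum (P := P) ⟨not_contains_of_isBipartite hF hB, hBM⟩)
  rw [abs_le]
  constructor <;> nlinarith

/-- **Corollary.** If `χ(F) > 2` and `s ≥ 1`, then `ex(n, {F, M_{s+1}}) = s(n − s) + O(1)`. -/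
theorem extremal_asymptotic {V : Type*} [Fintype V] (F : SimpleGraph V)
    (hF : 2 < F.chromaticNumber) (s : ℕ) (hs : 0 < s) :
    ∃ C : ℤ, ∀ n : ℕ,
      |(exNum n (fun G => ¬ Contains G F ∧ ¬ Contains G (matchingGraph (s + 1))) : ℤ) -
          (s : ℤ) * ((n : ℤ) - (s : ℤ))| ≤ C :=
  extremal_asymptotic_general F hF s
end

section
/- Let G be a graph with no matching of size s + 1. Then at most s vertices of G have degree greater than 2s. (Equivalently: if v₁, …, vₙ are the vertices of G in decreasing order of degree, then d(v_{s+1}) ≤ 2s.) -/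
open SimpleGraph Finset

/-!
Choose `s + 1` vertices `U` of degree greater than `2s`. Each of them has more than `2s - s = s`
neighbours outside `U`, i.e. at least `#U` of them, so Hall's condition holds trivially and the
vertices of `U` get pairwise distinct neighbours outside `U`: a matching of size `s + 1`.
-/

theorem exists_injective_forall_mem_of_card_le {ι α : Type*} [Fintype ι] [DecidableEq α]
    (t : ι → Finset α) (ht : ∀ i, Fintype.card ι ≤ #(t i)) :
    ∃ f : ι → α, Function.Injective f ∧ ∀ i, f i ∈ t i := by
  refine (Finset.all_card_le_biUnion_card_iff_exists_injective t).1 fun s => ?_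
  obtain rfl | ⟨i, hi⟩ := s.eq_empty_or_nonempty
  · simp
  · calc #s ≤ Fintype.card ι := card_le_univ s
      _ ≤ #(t i) := ht i
      _ ≤ #(s.biUnion t) := card_le_card (subset_biUnion_of_mem t hi)

theorem SimpleGraph.degree_lt_card_neighborFinset_sdiff_add_card {V : Type*} [DecidableEq V]
    (G : SimpleGraph V) {v : V} [Fintype (G.neighborSet v)] {U : Finset V}
    (hv : v ∈ U) : G.degree v < #(G.neighborFinset v \ U) + #U := by
  have hinter : G.neighborFinset v ∩ U ⊆ U.erase v := fun x hx => by
    rw [mem_inter, mem_neighborFinset] at hx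
    exact mem_erase.2 ⟨hx.1.ne.symm, hx.2⟩
  have herase : #(U.erase v) < #U := card_erase_lt_of_mem hv
  rw [← card_neighborFinset_eq_degree, ← card_sdiff_add_card_inter _ U]
  have hinter_card := card_le_card hinter
  omega

theorem contains_matchingGraph_of_adj {V : Type*} (G : SimpleGraph V) {t : ℕ}
    (u w : Fin t → V) (hu : Function.Injective u) (hw : Function.Injective w)
    (huw : ∀ i j, u i ≠ w j) (hadj : ∀ i, G.Adj (u i) (w i)) :
    Contains G (matchingGraph t) := by
  refine ⟨fun p => ![u p.1, w p.1] p.2, ?_, ?_⟩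
  · rintro ⟨i, a⟩ ⟨j, b⟩ hij
    fin_cases a <;> fin_cases b
    · obtain rfl : i = j := hu hij; rfl
    · exact absurd hij (huw i j)
    · exact absurd hij.symm (huw j i)
    · obtain rfl : i = j := hw hij; rfl
  · rintro ⟨i, a⟩ ⟨j, b⟩ hab
    obtain ⟨hne, rfl | rfl⟩ := (fromRel_adj _ _ _).1 hab <;>
    fin_cases a <;> fin_cases b <;> simp_all [(hadj _).symm]

/-- If `G` has no matching of size `s + 1`, then at most `s` vertices of `G` have degree
greater than `2s`. -/
theorem few_high_degree_vertices {V : Type*} [Fintype V] (G : SimpleGraph V)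
    [DecidableRel G.Adj] (s : ℕ) (h : ¬ Contains G (matchingGraph (s + 1))) :
    {v : V | 2 * s < G.degree v}.ncard ≤ s := by
  classical
  by_contra! hc
  obtain ⟨u⟩ : Nonempty (Fin (s + 1) ↪ {v // 2 * s < G.degree v}) := by
    refine Function.Embedding.nonempty_of_card_le ?_
    rwa [Fintype.card_fin, Fintype.card_subtype, ← Set.toFinset_ofPred,
      ← Set.ncard_eq_toFinset_card']
  have hu : Function.Injective fun i => (u i : V) := Subtype.val_injective.comp u.injective
  set U := univ.image fun i => (u i : V)
  have hU : #U = s + 1 := by rw [card_image_of_injective _ hu, card_fin]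
  have hmem : ∀ i, (u i : V) ∈ U := fun i => mem_image_of_mem _ (mem_univ i)
  have hpartners : ∀ i, Fintype.card (Fin (s + 1)) ≤ #(G.neighborFinset (u i) \ U) := by
    intro i
    have hdeg := G.degree_lt_card_neighborFinset_sdiff_add_card (hmem i)
    have hhigh := (u i).2
    rw [Fintype.card_fin]
    omega
  obtain ⟨w, hw, hwN⟩ := exists_injective_forall_mem_of_card_le _ hpartners
  refine h (contains_matchingGraph_of_adj G (fun i => u i) w hu hw (fun i j hij => ?_)
    fun i => (G.mem_neighborFinset _ _).1 (mem_sdiff.1 (hwN i)).1)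
  exact (mem_sdiff.1 (hwN j)).2 (hij ▸ hmem i)
end

section
/- Let F be a connected bipartite graph, p = p(F) ≤ s, and n ≥ 2s + p. Then ex(n, {F, M_{s+1}}) ≥ (p − 1)(n + p − 2s) + ex(2s − 2p + 1, F). (Witness: the disjoint union of the complete bipartite graph K_{p−1, n+p−2s} and an F-free graph on 2s − 2p + 1 vertices with the maximum number of edges; every component is F-free and the matching number is at most (p − 1) + (s − p) < s + 1.) -/
/-!
The witness is the disjoint union of `K_{p-1, n+p-2s}` and an extremal `F`-free graph `H` on
`2s - 2p + 1` vertices. A copy of the connected graph `F` lies in one component; in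
`K_{p-1, n+p-2s}` the preimage of the small side would be a colour class of `F` with fewer than
`p` vertices. An edge of a matching either meets the small side of `K_{p-1, n+p-2s}` or uses two
vertices of `H`, so a matching has at most `(p - 1) + (s - p) < s + 1` edges. For `p = 0` the
graph `F` is a single vertex, so no graph on `2s + 1` vertices is `F`-free.
-/

open SimpleGraph Finset

lemma contains_iff_isContained {V W : Type*} {G : SimpleGraph V} {H : SimpleGraph W} :
    Contains G H ↔ H ⊑ G :=
  ⟨fun ⟨f, hf, hadj⟩ => ⟨⟨⟨f, fun h => hadj h⟩, hf⟩⟩,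
    fun ⟨f⟩ => ⟨f, f.injective, fun _ _ h => f.toHom.map_adj h⟩⟩

section edgeCount

variable {V W : Type*}

lemma edgeCount_congr {G : SimpleGraph V} {H : SimpleGraph W} (e : G ≃g H) :
    edgeCount G = edgeCount H := by
  simpa only [edgeCount, ← Nat.card_coe_set_eq] using Nat.card_congr e.mapEdgeSet

lemma edgeCount_sum [Finite V] [Finite W] (G : SimpleGraph V) (H : SimpleGraph W) :
    edgeCount (G ⊕g H) = edgeCount G + edgeCount H := by
  simp only [edgeCount, ← Nat.card_coe_set_eq, Nat.card_congr (edgeSetSumEquiv (G := G) (H := H)),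
    Nat.card_sum]

lemma edgeCount_completeBipartiteGraph [Finite V] [Finite W] :
    edgeCount (completeBipartiteGraph V W) = Nat.card V * Nat.card W := by
  rw [edgeCount, Set.ncard_def, encard_edgeSet_completeBipartiteGraph]
  simp [ENat.card_eq_coe_natCard]

end edgeCount

namespace SimpleGraph

variable {U V W : Type*} {F : SimpleGraph U} {G : SimpleGraph V} {H : SimpleGraph W}

lemma isContained_of_forall_isLeft (f : Copy F (G ⊕g H)) (hf : ∀ x, (f x).isLeft) :
    F ⊑ G := by
  refine ⟨⟨⟨fun x => (f x).getLeft (hf x), fun {a b} hab => ?_⟩, fun a b hab => ?_⟩⟩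
  · rw [← sum_adj_inl (H := H), Sum.inl_getLeft, Sum.inl_getLeft]
    exact f.toHom.map_adj hab
  · apply f.injective
    simp only [Copy.toHom_apply]
    rw [← Sum.inl_getLeft (f a) (hf a), ← Sum.inl_getLeft (f b) (hf b)]
    exact congrArg Sum.inl hab

lemma Connected.isContained_sum (hF : F.Connected) (h : F ⊑ G ⊕g H) : F ⊑ G ∨ F ⊑ H := by
  obtain ⟨f⟩ := h
  obtain ⟨x₀⟩ := hF.nonempty
  have hside : ∀ x, (f x).isLeft = (f x₀).isLeft := fun x => by
    have hreach := (hF x₀ x).map f.toHom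
    cases hx : f x <;> cases h₀ : f x₀ <;> simp_all [not_reachable_sum_inl_inr, reachable_comm]
  cases h₀ : (f x₀).isLeft
  · refine .inr (isContained_of_forall_isLeft (Iso.sumComm.toCopy.comp f) fun x => ?_)
    simpa [Copy.comp_apply, Iso.sumComm, h₀] using hside x
  · exact .inl (isContained_of_forall_isLeft f fun x => (hside x).trans h₀)

end SimpleGraph

section exNum

variable {n : ℕ} {P : SimpleGraph (Fin n) → Prop}

lemma bddAbove_edgeCounts : BddAbove {m | ∃ G : SimpleGraph (Fin n), P G ∧ m = edgeCount G} :=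
  (Set.finite_range edgeCount).subset (by rintro _ ⟨G, -, rfl⟩; exact ⟨G, rfl⟩) |>.bddAbove

lemma edgeCount_le_exNum {G : SimpleGraph (Fin n)} (hG : P G) : edgeCount G ≤ exNum n P :=
  le_csSup bddAbove_edgeCounts ⟨G, hG, rfl⟩

lemma edgeCount_le_exNum_of_equiv {W : Type*} (G : SimpleGraph W) (e : W ≃ Fin n)
    (hP : ∀ G' : SimpleGraph (Fin n), (G ≃g G') → P G') : edgeCount G ≤ exNum n P :=
  edgeCount_congr (Iso.map e G) ▸ edgeCount_le_exNum (hP _ (Iso.map e G))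

lemma exists_edgeCount_eq_exNum (h : ∃ G, P G) :
    ∃ G : SimpleGraph (Fin n), P G ∧ edgeCount G = exNum n P := by
  obtain ⟨G₀, hG₀⟩ := h
  obtain ⟨G, hG, hGe⟩ :
      exNum n P ∈ {m | ∃ G : SimpleGraph (Fin n), P G ∧ m = edgeCount G} :=
    Nat.sSup_mem ⟨_, G₀, hG₀, rfl⟩ bddAbove_edgeCounts
  exact ⟨G, hG, hGe.symm⟩

lemma exNum_eq_zero (h : ∀ G, ¬ P G) : exNum n P = 0 := by
  have hempty : {m | ∃ G : SimpleGraph (Fin n), P G ∧ m = edgeCount G} = ∅ :=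
    Set.eq_empty_of_forall_notMem fun _ ⟨G, hG, _⟩ => h G hG
  rw [exNum, hempty, csSup_empty, Nat.bot_eq_zero]

end exNum

section twoColorClass

variable {V W α β : Type*} {F : SimpleGraph V}

lemma twoColorClass_empty_iff : twoColorClass F ∅ ↔ F = ⊥ := by
  simp [twoColorClass, SimpleGraph.eq_bot_iff_forall_not_adj]

lemma exists_twoColorClass_ncard_le [Finite α] (h : F ⊑ completeBipartiteGraph α β) :
    ∃ A, twoColorClass F A ∧ A.ncard ≤ Nat.card α := by
  obtain ⟨f⟩ := h
  refine ⟨{v | (f v).isLeft}, ?_, ?_⟩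
  · constructor <;> intro a ha b hb hab <;> have hadj := f.toHom.map_adj hab <;>
      cases hfa : f a <;> cases hfb : f b <;> simp_all
  · calc {v | (f v).isLeft}.ncard = (f '' {v | (f v).isLeft}).ncard :=
          (Set.ncard_image_of_injective _ f.injective).symm
      _ ≤ (Set.range Sum.inl).ncard :=
          Set.ncard_le_ncard (Set.image_subset_iff.2 fun v hv =>
            (Sum.isLeft_iff.1 hv).imp fun _ h => h.symm) (Set.finite_range _)
      _ = Nat.card α := Set.ncard_range_of_injective Sum.inl_injective

lemma contains_of_twoColorClass_empty (hconn : F.Connected) (hF : twoColorClass F ∅)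
    [Nonempty W] (G : SimpleGraph W) : Contains G F := by
  obtain rfl := twoColorClass_empty_iff.1 hF
  have : Subsingleton V := (connected_bot_iff.1 hconn).1
  exact contains_iff_isContained.2
    ⟨Copy.bot ⟨fun _ => Classical.arbitrary W, fun x y _ => Subsingleton.elim x y⟩⟩

lemma not_isContained_completeBipartiteGraph_sum [Finite α] {H : SimpleGraph W}
    (hconn : F.Connected) (hp : ∀ A, twoColorClass F A → Nat.card α < A.ncard)
    (hH : ¬ F ⊑ H) : ¬ F ⊑ completeBipartiteGraph α β ⊕g H := fun h => by
  rcases hconn.isContained_sum h with hK | hH'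
  · obtain ⟨A, hA, hAcard⟩ := exists_twoColorClass_ncard_le hK
    exact (hp A hA).not_ge hAcard
  · exact hH hH'

end twoColorClass

section matching

variable {W : Type*} {t : ℕ}

lemma matchingGraph_adj_s9 (i : Fin t) : (matchingGraph t).Adj (i, 0) (i, 1) := by
  simp [matchingGraph]

lemma two_mul_le_of_matchingGraph_isContained {G : SimpleGraph W} (A C : Finset W)
    (hcover : ∀ ⦃u v⦄, G.Adj u v → u ∈ A ∨ v ∈ A ∨ u ∈ C ∧ v ∈ C)
    (h : matchingGraph t ⊑ G) : 2 * t ≤ 2 * #A + #C := by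
  classical
  obtain ⟨f⟩ := h
  have hedge (i : Fin t) := hcover (f.toHom.map_adj (matchingGraph_adj_s9 i))
  -- `T` indexes the matching edges avoiding `A`: each uses two vertices of `C`, and every other
  -- edge is charged to an endpoint in `A`.
  set T := univ.filter fun i : Fin t => f (i, 0) ∉ A ∧ f (i, 1) ∉ A
  have hT : 2 * #T ≤ #C := calc
    2 * #T = #(T ×ˢ (univ : Finset (Fin 2))) := by simp [mul_comm]
    _ ≤ #C := card_le_card_of_injOn f (fun ⟨i, j⟩ hij => by
        simp only [coe_product, Set.mem_prod, mem_coe, T, mem_filter] at hij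
        have := hedge i
        fin_cases j <;> simp_all) f.injective.injOn
  have hTc : #Tᶜ ≤ #A := by
    let j : Fin t → Fin 2 := fun i => if f (i, 0) ∈ A then 0 else 1
    refine card_le_card_of_injOn (fun i => f (i, j i)) (fun i hi => ?_)
      fun i _ i' _ h => congrArg Prod.fst (f.injective h)
    simp only [coe_compl, Set.mem_compl_iff, mem_coe, T, mem_filter] at hi
    by_cases h0 : f (i, 0) ∈ A <;> simp_all [j]
  have := card_add_card_compl T
  simp only [Fintype.card_fin] at this
  omega

lemma not_matchingGraph_isContained_sum {a c : ℕ} {β : Type*} (H : SimpleGraph (Fin c))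
    (h : 2 * a + c < 2 * t) : ¬ matchingGraph t ⊑ completeBipartiteGraph (Fin a) β ⊕g H := by
  classical
  intro hM
  have := two_mul_le_of_matchingGraph_isContained
    (univ.map (Function.Embedding.inl.trans Function.Embedding.inl))
    (univ.map Function.Embedding.inr) ?_ hM
  · simp only [card_map, card_univ, Fintype.card_fin] at this
    omega
  · rintro ((u | u) | u) ((v | v) | v) huv <;> simp_all

end matching

/-- **Construction 2.** If `F` is a connected bipartite graph with `p = p(F) ≤ s`, then for
all `n ≥ 2s + p`, `ex(n, {F, M_{s+1}}) ≥ (p − 1)(n + p − 2s) + ex(2s − 2p + 1, F)`. -/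
theorem construction_two {V : Type*} [Fintype V] (F : SimpleGraph V)
    (hconn : F.Connected) (p s : ℕ)
    (hp : IsLeast {k : ℕ | ∃ A : Set V, twoColorClass F A ∧ A.ncard = k} p)
    (hps : p ≤ s) :
    ∀ n : ℕ, 2 * s + p ≤ n →
      (p - 1) * (n + p - 2 * s) + exNum (2 * s - 2 * p + 1) (fun G => ¬ Contains G F) ≤
        exNum n (fun G => ¬ Contains G F ∧ ¬ Contains G (matchingGraph (s + 1))) := by
  intro n hn
  obtain rfl | hp₀ := Nat.eq_zero_or_pos p
  · obtain ⟨A, hA, hA₀⟩ := hp.1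
    obtain rfl := (Set.ncard_eq_zero).1 hA₀
    rw [exNum_eq_zero fun G hG => hG (contains_of_twoColorClass_empty hconn hA G)]
    simp
  have hF : F ≠ ⊥ := fun hF => by
    have := hp.2 ⟨∅, twoColorClass_empty_iff.2 hF, Set.ncard_empty V⟩
    omega
  obtain ⟨H, hH, hHcard⟩ := exists_edgeCount_eq_exNum
    (n := 2 * s - 2 * p + 1) (P := fun G => ¬ Contains G F)
    ⟨⊥, contains_iff_isContained.not.2 (free_bot hF)⟩
  let K := completeBipartiteGraph (Fin (p - 1)) (Fin (n + p - 2 * s)) ⊕g H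
  have hKF : ¬ F ⊑ K := not_isContained_completeBipartiteGraph_sum hconn
    (fun A hA => by
      have := hp.2 ⟨A, hA, rfl⟩
      rw [Nat.card_eq_fintype_card, Fintype.card_fin]
      omega)
    (contains_iff_isContained.not.1 hH)
  have hKM : ¬ matchingGraph (s + 1) ⊑ K := not_matchingGraph_isContained_sum H (by omega)
  have hsize : p - 1 + (n + p - 2 * s) + (2 * s - 2 * p + 1) = n := by omega
  calc _ = edgeCount K := by simp [K, edgeCount_sum, edgeCount_completeBipartiteGraph, hHcard]
    _ ≤ _ := edgeCount_le_exNum_of_equiv K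
        (((finSumFinEquiv.sumCongr (.refl _)).trans finSumFinEquiv).trans (finCongr hsize))
        fun G e => by
          simpa only [contains_iff_isContained, ← isContained_congr_right e] using ⟨hKF, hKM⟩
end

section
/- Let F be a balanced tree on 2p vertices with p ≥ 2 (so F is a tree whose two bipartition classes both have size p). Then F has a vertex x that is adjacent to at least one leaf of F, to at most p − 1 leaves of F, and to exactly one vertex of degree greater than 1. -/
open SimpleGraph Finset

/-!
Root the tree at a vertex `r` of degree at least two and let `x` be a non-leaf vertex as far
from `r` as possible. Every neighbour of `x` farther from `r` is a leaf by maximality, and `x`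
has a unique neighbour `y` closer to `r`, which is a non-leaf since it is either `r` or has a
neighbour closer still. If `x = r`, then every vertex lies within distance one of `r`, so
`deg r = 2p - 1 > p`, impossible in a balanced tree; so `y` exists, and `x` has
`deg x - 1 ≥ 1` leaf neighbours, at most `p - 1` because all neighbours of `x` lie in the
colour class not containing `x`.
-/

namespace twoColorClass

variable {V : Type*} {G : SimpleGraph V} {A : Set V}

lemma compl (hA : twoColorClass G A) : twoColorClass G Aᶜ :=
  ⟨hA.2, by simpa only [compl_compl] using hA.1⟩

lemma neighborSet_subset_compl (hA : twoColorClass G A) {x : V} (hx : x ∈ A) :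
    G.neighborSet x ⊆ Aᶜ :=
  fun _ hy hyA => hA.1 x hx _ hyA hy

lemma degree_le_ncard_compl [Fintype V] [DecidableRel G.Adj] (hA : twoColorClass G A) {x : V}
    (hx : x ∈ A) : G.degree x ≤ Aᶜ.ncard := by
  rw [← card_neighborFinset_eq_degree, ← Set.ncard_coe_finset, coe_neighborFinset]
  exact Set.ncard_le_ncard (hA.neighborSet_subset_compl hx)

lemma degree_le_of_ncard_eq [Fintype V] [DecidableRel G.Adj] (hA : twoColorClass G A) {p : ℕ}
    (hcard : Fintype.card V = 2 * p) (hAcard : A.ncard = p) (x : V) : G.degree x ≤ p := by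
  have hAc : Aᶜ.ncard = p := by
    have := Set.ncard_add_ncard_compl A
    rw [Nat.card_eq_fintype_card] at this
    omega
  by_cases hx : x ∈ A
  · exact hAc ▸ hA.degree_le_ncard_compl hx
  · simpa only [hAcard, compl_compl] using hA.compl.degree_le_ncard_compl hx

end twoColorClass

namespace SimpleGraph

variable {V : Type*} {G : SimpleGraph V}

lemma exists_adj_dist_add_one_eq {r v : V} (h : G.dist r v ≠ 0) :
    ∃ z, G.Adj z v ∧ G.dist r z + 1 = G.dist r v := by
  obtain ⟨q, hq⟩ := exists_walk_of_dist_ne_zero h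
  have hnil : ¬ q.Nil := by rw [← Walk.length_eq_zero_iff]; omega
  have hadj := q.adj_penultimate hnil
  have hle := G.dist_le q.dropLast
  rw [Walk.length_dropLast] at hle
  refine ⟨q.penultimate, hadj, ?_⟩
  rcases hadj.diff_dist_adj (u := r) with h' | h' | h' <;> omega

lemma IsAcyclic.eq_of_adj_of_dist_add_one_eq (hG : G.IsAcyclic) {r v z₁ z₂ : V}
    (h₁ : G.Adj z₁ v) (h₂ : G.Adj z₂ v)
    (hd₁ : G.dist r z₁ + 1 = G.dist r v) (hd₂ : G.dist r z₂ + 1 = G.dist r v) : z₁ = z₂ := by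
  have hv : G.Reachable r v := Reachable.of_dist_ne_zero (by omega)
  have hpath : ∀ z, G.Adj z v → G.dist r z + 1 = G.dist r v →
      ∃ p : G.Path r v, p.1.penultimate = z := by
    intro z h hd
    obtain ⟨q, hq⟩ := (hv.trans h.symm.reachable).exists_walk_length_eq_dist
    exact ⟨⟨q.concat h, (q.concat h).isPath_of_length_eq_dist (by simp [hq, hd])⟩,
      q.penultimate_concat h⟩
  obtain ⟨p₁, rfl⟩ := hpath z₁ h₁ hd₁
  obtain ⟨p₂, rfl⟩ := hpath z₂ h₂ hd₂
  rw [(hG.subsingleton_path r v).elim p₁ p₂]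

section Degree

variable [Fintype V] [DecidableRel G.Adj]

lemma IsTree.exists_one_lt_degree (hG : G.IsTree) (hV : 3 ≤ Fintype.card V) :
    ∃ v, 1 < G.degree v := by
  by_contra! h
  have hsum : ∑ v, G.degree v ≤ ∑ _v : V, 1 := sum_le_sum fun v _ => h v
  rw [sum_degrees_eq_twice_card_edges, sum_const, card_univ, smul_eq_mul, mul_one] at hsum
  have := hG.card_edgeFinset
  omega

lemma Connected.card_sub_one_le_degree (hG : G.Connected) {r : V}
    (h : ∀ v, G.dist r v ≤ 1) : Fintype.card V - 1 ≤ G.degree r := by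
  classical
  rw [← card_neighborFinset_eq_degree, ← card_univ, ← card_erase_of_mem (mem_univ r)]
  refine card_le_card fun v hv => (G.mem_neighborFinset r v).2 (dist_eq_one_iff_adj.1 ?_)
  have := hG.pos_dist_of_ne (ne_of_mem_erase hv).symm
  have := h v
  omega

variable {r : V}

lemma one_lt_degree_of_adj_of_dist_eq (hr : 1 < G.degree r) {u v : V} (huv : G.Adj u v)
    (hd : G.dist r v = G.dist r u + 1) : 1 < G.degree u := by
  by_cases hu : u = r
  · exact hu ▸ hr
  have hru : G.dist r u ≠ 0 :=
    (Reachable.of_dist_ne_zero (by omega : G.dist r v ≠ 0)).trans huv.symm.reachable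
      |>.pos_dist_of_ne (Ne.symm hu) |>.ne'
  obtain ⟨z, hzu, hz⟩ := exists_adj_dist_add_one_eq hru
  rw [← card_neighborFinset_eq_degree, one_lt_card]
  exact ⟨z, (G.mem_neighborFinset u z).2 hzu.symm, v, (G.mem_neighborFinset u v).2 huv,
    by rintro rfl; omega⟩

lemma dist_le_add_one_of_forall_dist_le (hr : 1 < G.degree r) {x : V}
    (hmax : ∀ v, 1 < G.degree v → G.dist r v ≤ G.dist r x) (v : V) :
    G.dist r v ≤ G.dist r x + 1 := by
  by_contra! hv
  obtain ⟨u, huv, hu⟩ := exists_adj_dist_add_one_eq (G := G) (r := r) (v := v) (by omega)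
  have := hmax u (one_lt_degree_of_adj_of_dist_eq hr huv hu.symm)
  omega

lemma IsTree.exists_adj_forall_degree_eq_one (hG : G.IsTree) (hr : 1 < G.degree r) {x : V}
    (hmax : ∀ v, 1 < G.degree v → G.dist r v ≤ G.dist r x) (hx : G.dist r x ≠ 0) :
    ∃ y, G.Adj x y ∧ 1 < G.degree y ∧ ∀ z, G.Adj x z → z ≠ y → G.degree z = 1 := by
  obtain ⟨y, hyx, hy⟩ := exists_adj_dist_add_one_eq hx
  refine ⟨y, hyx.symm, one_lt_degree_of_adj_of_dist_eq hr hyx hy.symm, fun z hxz hzy => ?_⟩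
  rcases hG.dist_eq_dist_add_one_of_adj r hxz with hd | hd
  · exact absurd (hG.isAcyclic.eq_of_adj_of_dist_add_one_eq hxz.symm hyx hd.symm hy) hzy
  · have hz := (G.degree_pos_iff_exists_adj z).2 ⟨x, hxz.symm⟩
    have := mt (hmax z) (by omega)
    omega

lemma filter_one_lt_degree_eq_singleton {x y : V} (hxy : G.Adj x y) (hy : 1 < G.degree y)
    (hleaf : ∀ z, G.Adj x z → z ≠ y → G.degree z = 1) :
    (G.neighborFinset x).filter (fun z => 1 < G.degree z) = {y} := by
  refine eq_singleton_iff_unique_mem.2 ⟨mem_filter.2 ⟨(G.mem_neighborFinset x y).2 hxy, hy⟩, ?_⟩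
  intro z hz
  rw [mem_filter, mem_neighborFinset] at hz
  by_contra hzy
  have := hleaf z hz.1 hzy
  omega

lemma card_filter_degree_eq_one {x y : V} (hxy : G.Adj x y) (hy : 1 < G.degree y)
    (hleaf : ∀ z, G.Adj x z → z ≠ y → G.degree z = 1) :
    ((G.neighborFinset x).filter (fun z => G.degree z = 1)).card = G.degree x - 1 := by
  classical
  have hleaves : (G.neighborFinset x).filter (fun z => G.degree z = 1) =
      (G.neighborFinset x).erase y := by
    ext z
    simp only [mem_filter, mem_erase, mem_neighborFinset]
    exact ⟨fun ⟨hxz, hz⟩ => ⟨by rintro rfl; omega, hxz⟩, fun ⟨hzy, hxz⟩ => ⟨hxz, hleaf z hxz hzy⟩⟩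
  rw [hleaves, card_erase_of_mem ((G.mem_neighborFinset x y).2 hxy), card_neighborFinset_eq_degree]

end Degree

end SimpleGraph

/-- A balanced tree `F` on `2p` vertices with `p ≥ 2` has a vertex `x` adjacent to at least
one leaf, to at most `p − 1` leaves, and to exactly one vertex of degree greater than 1. -/
theorem balanced_tree_special_vertex {V : Type*} [Fintype V] (F : SimpleGraph V)
    [DecidableRel F.Adj] (hT : F.IsTree) (p : ℕ) (hp : 2 ≤ p)
    (hcard : Fintype.card V = 2 * p) (A : Set V) (hA : twoColorClass F A)
    (hAcard : A.ncard = p) :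
    ∃ x : V,
      (∃ y : V, F.Adj x y ∧ F.degree y = 1) ∧
      ((F.neighborFinset x).filter (fun y => F.degree y = 1)).card ≤ p - 1 ∧
      ((F.neighborFinset x).filter (fun y => 1 < F.degree y)).card = 1 := by
  have hdeg := hA.degree_le_of_ncard_eq hcard hAcard
  obtain ⟨r, hr⟩ := hT.exists_one_lt_degree (by omega)
  obtain ⟨x, hx, hmax⟩ :=
    exists_max_image (univ.filter fun v => 1 < F.degree v) (F.dist r) ⟨r, by simpa using hr⟩
  simp only [mem_filter, mem_univ, true_and] at hx hmax
  have hxr : F.dist r x ≠ 0 := by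
    intro h0
    have := hT.connected.card_sub_one_le_degree
      fun v => h0 ▸ dist_le_add_one_of_forall_dist_le hr hmax v
    have := hdeg r
    omega
  obtain ⟨y, hxy, hy, hleaf⟩ := hT.exists_adj_forall_degree_eq_one hr hmax hxr
  have hleaves := card_filter_degree_eq_one hxy hy hleaf
  refine ⟨x, ?_, ?_, by rw [filter_one_lt_degree_eq_singleton hxy hy hleaf, card_singleton]⟩
  · obtain ⟨z, hz⟩ := card_pos.1 (hleaves ▸ Nat.sub_pos_of_lt hx)
    rw [mem_filter, mem_neighborFinset] at hz
    exact ⟨z, hz⟩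
  · have := hdeg x
    omega
end
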